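/- Let k ≥ 2 and let n₂, t₂, n₃, n₄ be nonnegative integers satisfying 2k² − 2k = n₂ + 2t₂ + 3n₃ + 6n₄. Then there is no integer r with 0 ≤ r ≤ (2k−1)/2 such that r² − r(2k−1) + (2k−1)² = n₂ + 3t₂ + 4n₃ + 9n₄. -/
import Mathlib

/-- Arithmetic core of non-freeness of Q-conic arrangements. -/
theorem stmt1 (k : ℤ) (n₂ t₂ n₃ n₄ : ℤ) (hk : 2 ≤ k)
    (hn₂ : 0 ≤ n₂) (ht₂ : 0 ≤ t₂) (hn₃ : 0 ≤ n₃) (hn₄ : 0 ≤ n₄)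
    (hcount : 2 * k ^ 2 - 2 * k = n₂ + 2 * t₂ + 3 * n₃ + 6 * n₄) :
    ¬ ∃ r : ℤ, 0 ≤ r ∧ 2 * r ≤ 2 * k - 1 ∧
      r ^ 2 - r * (2 * k - 1) + (2 * k - 1) ^ 2 = n₂ + 3 * t₂ + 4 * n₃ + 9 * n₄ := by
  rintro ⟨r, hr0, hr1, heq⟩
  nlinarith [sq_nonneg (2 * r - (2 * k - 1)), sq_nonneg r]
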